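/- Let P₁ and P₂ be finite partially ordered sets, let r ∈ ℕ, and let T ∈ ℝ^{P₁×P₂} be any matrix. Then there exists θ* in the set N_{≤r} = { ∑_{i=1}^r a_i b_iᵀ : a_i ∈ C(P₁), b_i ∈ C(P₂) } such that ‖T − θ*‖_F ≤ ‖T − θ‖_F for all θ ∈ N_{≤r}, where ‖·‖_F denotes the Frobenius norm. -/

import Mathlib

/-!
The parametrization `(a, b) ↦ ∑ i, a i (b i)ᵀ` is continuous, but its domain, a product of order
cones, is not compact. Rescaling `(a i, b i)` to `(s⁻¹ • a i, s • b i)` with `s = ∑ x, a i x`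
leaves the sum `θ` unchanged, makes `a i ≤ 1`, and gives `s • b i y = ∑ x, a i x * b i y ≤
∑ x, θ x y`; so the part of `N_{≤r}` lying below a constant `B` is a closed subset of the image of
a compact set. A competitor `θ` can beat `0` only if `‖T - θ‖_F ≤ ‖T‖_F`, which forces
`θ ≤ 2‖T‖_F` entrywise, so a minimizer of `‖T - ·‖_F` over that compact part is global.
-/

/-- The order cone of a finite poset: nonnegative, nondecreasing real-valued functions. -/
def orderCone (P : Type*) [PartialOrder P] : Set (P → ℝ) :=
  {f | (∀ x, 0 ≤ f x) ∧ ∀ ⦃x y : P⦄, x ≤ y → f x ≤ f y}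

/-- The Frobenius norm of a matrix. -/
noncomputable def frobNorm {P₁ P₂ : Type*} [Fintype P₁] [Fintype P₂]
    (M : P₁ → P₂ → ℝ) : ℝ :=
  Real.sqrt (∑ x : P₁, ∑ y : P₂, (M x y) ^ 2)

open Finset

section OrderCone

variable {P : Type*} [PartialOrder P]

theorem zero_mem_orderCone : (0 : P → ℝ) ∈ orderCone P :=
  ⟨fun _ => le_rfl, fun _ _ _ => le_rfl⟩

theorem smul_mem_orderCone {f : P → ℝ} (hf : f ∈ orderCone P) {c : ℝ} (hc : 0 ≤ c) :
    c • f ∈ orderCone P :=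
  ⟨fun x => mul_nonneg hc (hf.1 x), fun _ _ hxy => mul_le_mul_of_nonneg_left (hf.2 hxy) hc⟩

theorem isClosed_orderCone : IsClosed (orderCone P) := by
  have : orderCone P = (⋂ x, {f | 0 ≤ f x}) ∩ ⋂ (x) (y) (_ : x ≤ y), {f | f x ≤ f y} := by
    ext f; simp [orderCone]
  rw [this]
  exact (isClosed_iInter fun x => isClosed_le continuous_const (continuous_apply x)).inter
    (isClosed_iInter fun x => isClosed_iInter fun y => isClosed_iInter fun _ =>
      isClosed_le (continuous_apply x) (continuous_apply y))

theorem isCompact_orderCone_inter_Iic [Finite P] (c : P → ℝ) :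
    IsCompact (orderCone P ∩ Set.Iic c) :=
  isCompact_Icc.of_isClosed_subset (isClosed_orderCone.inter isClosed_Iic)
    fun _ ⟨hf, hfc⟩ => ⟨hf.1, hfc⟩

end OrderCone

theorem abs_apply_le_frobNorm {P₁ P₂ : Type*} [Fintype P₁] [Fintype P₂]
    (M : P₁ → P₂ → ℝ) (x : P₁) (y : P₂) : |M x y| ≤ frobNorm M := by
  rw [frobNorm, ← Real.sqrt_sq_eq_abs]
  gcongr
  calc M x y ^ 2 ≤ ∑ y', M x y' ^ 2 :=
        single_le_sum (fun _ _ => sq_nonneg _) (mem_univ y)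
    _ ≤ ∑ x', ∑ y', M x' y' ^ 2 :=
        single_le_sum (f := fun x' => ∑ y', M x' y' ^ 2)
          (fun _ _ => sum_nonneg fun _ _ => sq_nonneg _) (mem_univ x)

theorem apply_le_two_mul_frobNorm {P₁ P₂ : Type*} [Fintype P₁] [Fintype P₂]
    {T θ : P₁ → P₂ → ℝ} (h : frobNorm (fun x y => T x y - θ x y) ≤ frobNorm T)
    (x : P₁) (y : P₂) : θ x y ≤ 2 * frobNorm T := by
  have hT := abs_apply_le_frobNorm T x y
  have hTθ := abs_apply_le_frobNorm (fun x y => T x y - θ x y) x y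
  linarith [le_abs_self (T x y), neg_abs_le (T x y - θ x y)]

theorem continuous_frobNorm_sub {P₁ P₂ : Type*} [Fintype P₁] [Fintype P₂]
    (T : P₁ → P₂ → ℝ) : Continuous fun θ : P₁ → P₂ → ℝ => frobNorm fun x y => T x y - θ x y := by
  unfold frobNorm
  fun_prop

section NDRank

variable (P₁ P₂ ι : Type*) [PartialOrder P₁] [PartialOrder P₂] [Fintype ι]

/-- The paper's `N_{≤r}` for `ι = Fin r`. -/
def ndRankLE : Set (P₁ → P₂ → ℝ) :=
  {θ | ∃ (a : ι → P₁ → ℝ) (b : ι → P₂ → ℝ),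
    (∀ i, a i ∈ orderCone P₁) ∧ (∀ i, b i ∈ orderCone P₂) ∧ ∀ x y, θ x y = ∑ i, a i x * b i y}

theorem zero_mem_ndRankLE : (0 : P₁ → P₂ → ℝ) ∈ ndRankLE P₁ P₂ ι :=
  ⟨0, 0, fun _ => zero_mem_orderCone, fun _ => zero_mem_orderCone, fun _ _ => by simp⟩

variable {P₁ P₂ ι} [Fintype P₁]

theorem exists_bounded_rep_of_mem_ndRankLE {θ : P₁ → P₂ → ℝ} (hθ : θ ∈ ndRankLE P₁ P₂ ι)
    {B : ℝ} (hB : ∀ x y, θ x y ≤ B) :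
    ∃ (a : ι → P₁ → ℝ) (b : ι → P₂ → ℝ),
      (∀ i, a i ∈ orderCone P₁ ∩ Set.Iic 1) ∧
      (∀ i, b i ∈ orderCone P₂ ∩ Set.Iic (fun _ => Fintype.card P₁ * B)) ∧
      ∀ x y, θ x y = ∑ i, a i x * b i y := by
  obtain ⟨a, b, ha, hb, hθ⟩ := hθ
  obtain rfl : θ = fun x y => ∑ i, a i x * b i y := funext₂ hθ
  set s : ι → ℝ := fun i => ∑ x, a i x
  have hs : ∀ i, 0 ≤ s i := fun i => sum_nonneg fun x _ => (ha i).1 x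
  have hle_s : ∀ i x, a i x ≤ s i := fun i x =>
    single_le_sum (f := a i) (fun x _ => (ha i).1 x) (mem_univ x)
  have hprod : ∀ i x y, (s i)⁻¹ * a i x * (s i * b i y) = a i x * b i y := by
    intro i x y
    rcases (hs i).eq_or_lt with h0 | hpos
    · have : a i x = 0 := le_antisymm (h0 ▸ hle_s i x) ((ha i).1 x)
      simp [this]
    · field_simp
  refine ⟨fun i => (s i)⁻¹ • a i, fun i => s i • b i, fun i => ⟨smul_mem_orderCone (ha i)
    (inv_nonneg.2 (hs i)), fun x => ?_⟩, fun i => ⟨smul_mem_orderCone (hb i) (hs i), fun y => ?_⟩,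
    fun x y => by simp [hprod]⟩
  · exact inv_mul_le_one_of_le₀ (hle_s i x) (hs i)
  · calc s i * b i y = ∑ x, a i x * b i y := sum_mul _ _ _
      _ ≤ ∑ x, ∑ j, a j x * b j y := sum_le_sum fun x _ =>
          single_le_sum (f := fun j => a j x * b j y)
            (fun j _ => mul_nonneg ((ha j).1 x) ((hb j).1 y)) (mem_univ i)
      _ ≤ ∑ _x : P₁, B := sum_le_sum fun x _ => hB x y
      _ = Fintype.card P₁ * B := by simp

variable [Fintype P₂]

theorem isCompact_ndRankLE_inter_Iic (B : ℝ) :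
    IsCompact (ndRankLE P₁ P₂ ι ∩ Set.Iic fun _ _ => B) := by
  set φ := fun p : (ι → P₁ → ℝ) × (ι → P₂ → ℝ) => fun x y => ∑ i, p.1 i x * p.2 i y
  set K := Set.univ.pi (fun _ : ι => orderCone P₁ ∩ Set.Iic 1) ×ˢ
    Set.univ.pi (fun _ : ι => orderCone P₂ ∩ Set.Iic fun _ => Fintype.card P₁ * B)
  have hK : IsCompact K :=
    (isCompact_univ_pi fun _ => isCompact_orderCone_inter_Iic _).prod
      (isCompact_univ_pi fun _ => isCompact_orderCone_inter_Iic _)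
  have hsub : ndRankLE P₁ P₂ ι ∩ Set.Iic (fun _ _ => B) ⊆ φ '' K := by
    rintro θ ⟨hθ, hθB⟩
    obtain ⟨a, b, ha, hb, hθab⟩ := exists_bounded_rep_of_mem_ndRankLE hθ fun x y => hθB x y
    exact ⟨(a, b), ⟨fun i _ => ha i, fun i _ => hb i⟩, funext₂ fun x y => (hθab x y).symm⟩
  have hsup : φ '' K ⊆ ndRankLE P₁ P₂ ι := by
    rintro _ ⟨p, ⟨hp₁, hp₂⟩, rfl⟩
    exact ⟨p.1, p.2, fun i => (hp₁ i trivial).1, fun i => (hp₂ i trivial).1, fun _ _ => rfl⟩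
  rw [(Set.subset_inter_iff.2 ⟨hsub, Set.inter_subset_right⟩).antisymm
    (Set.inter_subset_inter_left _ hsup)]
  exact (hK.image (by fun_prop)).inter_right isClosed_Iic

theorem exists_isMinOn_frobNorm_sub_ndRankLE (T : P₁ → P₂ → ℝ) :
    ∃ θstar ∈ ndRankLE P₁ P₂ ι,
      IsMinOn (fun θ => frobNorm fun x y => T x y - θ x y) (ndRankLE P₁ P₂ ι) θstar := by
  set f := fun θ : P₁ → P₂ → ℝ => frobNorm fun x y => T x y - θ x y
  set S := ndRankLE P₁ P₂ ι ∩ Set.Iic fun _ _ => 2 * frobNorm T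
  have h0S : (0 : P₁ → P₂ → ℝ) ∈ S :=
    ⟨zero_mem_ndRankLE P₁ P₂ ι, fun _ _ => mul_nonneg zero_le_two (Real.sqrt_nonneg _)⟩
  obtain ⟨θstar, ⟨hθstar, -⟩, hmin⟩ := (isCompact_ndRankLE_inter_Iic _).exists_isMinOn
    ⟨0, h0S⟩ (continuous_frobNorm_sub T).continuousOn
  refine ⟨θstar, hθstar, fun θ hθ => ?_⟩
  rcases le_total (f θ) (f 0) with hle | hle
  · exact hmin ⟨hθ, fun x y => apply_le_two_mul_frobNorm (by simpa [f] using hle) x y⟩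
  · exact (hmin h0S).trans hle

end NDRank

/-- for any matrix `T`, a best Frobenius-norm approximation from the set of
matrices with ND rank at most `r` exists. -/
theorem exists_best_NDrank_le_r_approximation
    (P₁ P₂ : Type*) [Fintype P₁] [Fintype P₂] [PartialOrder P₁] [PartialOrder P₂]
    (r : ℕ) (T : P₁ → P₂ → ℝ) :
    ∃ θstar ∈ {θ : P₁ → P₂ → ℝ | ∃ (a : Fin r → P₁ → ℝ) (b : Fin r → P₂ → ℝ),
        (∀ i, a i ∈ orderCone P₁) ∧ (∀ i, b i ∈ orderCone P₂) ∧
        ∀ x y, θ x y = ∑ i, a i x * b i y},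
      ∀ θ ∈ {θ : P₁ → P₂ → ℝ | ∃ (a : Fin r → P₁ → ℝ) (b : Fin r → P₂ → ℝ),
        (∀ i, a i ∈ orderCone P₁) ∧ (∀ i, b i ∈ orderCone P₂) ∧
        ∀ x y, θ x y = ∑ i, a i x * b i y},
      frobNorm (fun x y => T x y - θstar x y) ≤ frobNorm (fun x y => T x y - θ x y) := by
  obtain ⟨θstar, hθstar, hmin⟩ := exists_isMinOn_frobNorm_sub_ndRankLE (ι := Fin r) T
  exact ⟨θstar, hθstar, fun θ hθ => hmin hθ⟩
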